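/- For an immersion into Euclidean space, the q-th Gauss–Bonnet curvature of the induced metric satisfies L_{(q)} = (2q)! S_{(2q)}, i.e., it equals (2q)! times the 2q-th mean curvature of the immersion. (This follows from combining tr_g G_{(q)} = −((n−2q)/2) L_{(q)}, tr_g T_{(2q)} = (n−2q) S_{(2q)}, and G_{(q)} = −((2q)!/2) T_{(2q)}.) -/
import Mathlib


open scoped BigOperators RealInnerProductSpace

/-- Generalized Kronecker delta `δ^{a_1…a_k}_{b_1…b_k}`. -/
noncomputable def gkd {n k : ℕ} (a b : Fin k → Fin n) : ℝ :=
  Matrix.det (Matrix.of fun i j => if a i = b j then (1 : ℝ) else 0)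

/-- First member of the `s`-th index pair. -/
def pr1 {q : ℕ} (s : Fin q) : Fin (2 * q) := ⟨2 * s.1, by have := s.2; omega⟩

/-- Second member of the `s`-th index pair. -/
def pr2 {q : ℕ} (s : Fin q) : Fin (2 * q) := ⟨2 * s.1 + 1, by have := s.2; omega⟩

lemma pr1_ne_pr2 {q : ℕ} (s t : Fin q) : pr1 s ≠ pr2 t := by
  intro h
  have := congrArg Fin.val h
  simp [pr1, pr2] at this
  omega

lemma pr1_ne_pr1 {q : ℕ} {s t : Fin q} (h : s ≠ t) : pr1 s ≠ pr1 t := by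
  intro h'
  apply h
  have := congrArg Fin.val h'
  simp [pr1] at this
  exact Fin.ext (by omega)

lemma pr2_ne_pr2 {q : ℕ} {s t : Fin q} (h : s ≠ t) : pr2 s ≠ pr2 t := by
  intro h'
  apply h
  have := congrArg Fin.val h'
  simp [pr2] at this
  exact Fin.ext (by omega)

lemma gkd_swap {n k : ℕ} (a b : Fin k → Fin n) {x y : Fin k} (hxy : x ≠ y) :
    gkd a (b ∘ Equiv.swap x y) = - gkd a b := by
  have h : (Matrix.of fun i j => if a i = (b ∘ Equiv.swap x y) j then (1:ℝ) else 0)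
      = (Matrix.of fun i j => if a i = b j then (1:ℝ) else 0).submatrix id (Equiv.swap x y) := rfl
  unfold gkd
  rw [h, Matrix.det_permute', Equiv.Perm.sign_swap hxy]
  simp

lemma sum_swap_invariant {n q : ℕ} (a : Fin (2*q) → Fin n)
    (X Y : (Fin (2*q) → Fin n) → Fin q → ℝ)
    (hXY : ∀ b t, X (b ∘ Equiv.swap (pr1 t) (pr2 t)) t = Y b t)
    (hYX : ∀ b t, Y (b ∘ Equiv.swap (pr1 t) (pr2 t)) t = X b t)
    (hXs : ∀ b s t, s ≠ t → X (b ∘ Equiv.swap (pr1 t) (pr2 t)) s = X b s)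
    (hYs : ∀ b s t, s ≠ t → Y (b ∘ Equiv.swap (pr1 t) (pr2 t)) s = Y b s)
    (T : Finset (Fin q)) :
    ∑ b : Fin (2*q) → Fin n, gkd a b * ((∏ s ∈ T, -Y b s) * ∏ s ∈ Finset.univ \ T, X b s)
      = ∑ b : Fin (2*q) → Fin n, gkd a b * ∏ s : Fin q, X b s := by
  classical
  induction T using Finset.induction_on with
  | empty => simp
  | @insert t T htT ih =>
    have hbij : Function.Bijective
        (fun b : Fin (2*q) → Fin n => b ∘ Equiv.swap (pr1 t) (pr2 t)) := by
      apply Function.Involutive.bijective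
      intro b
      funext i
      simp [Function.comp, Equiv.swap_apply_self]
    rw [← Function.Bijective.sum_comp hbij
      (fun b => gkd a b * ((∏ s ∈ insert t T, -Y b s) * ∏ s ∈ Finset.univ \ insert t T, X b s))]
    refine (Finset.sum_congr rfl fun b _ => ?_).trans ih
    have e1 : gkd a (b ∘ Equiv.swap (pr1 t) (pr2 t)) = -gkd a b :=
      gkd_swap a b (pr1_ne_pr2 t t)
    have e2 : ∏ s ∈ insert t T, -Y (b ∘ Equiv.swap (pr1 t) (pr2 t)) s
        = -X b t * ∏ s ∈ T, -Y b s := by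
      rw [Finset.prod_insert htT, hYX]
      congr 1
      refine Finset.prod_congr rfl fun s hs => ?_
      rw [hYs b s t (by rintro rfl; exact htT hs)]
    have e3 : ∏ s ∈ Finset.univ \ insert t T, X (b ∘ Equiv.swap (pr1 t) (pr2 t)) s
        = ∏ s ∈ Finset.univ \ insert t T, X b s := by
      refine Finset.prod_congr rfl fun s hs => ?_
      refine hXs b s t fun h => ?_
      exact (Finset.mem_sdiff.mp hs).2 (h ▸ Finset.mem_insert_self t T)
    have e4 : ∏ s ∈ Finset.univ \ T, X b s
        = X b t * ∏ s ∈ Finset.univ \ insert t T, X b s := by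
      have ht' : t ∈ Finset.univ \ T := Finset.mem_sdiff.mpr ⟨Finset.mem_univ t, htT⟩
      have hset : (Finset.univ \ T).erase t = Finset.univ \ insert t T := by
        ext s
        simp only [Finset.mem_erase, Finset.mem_sdiff, Finset.mem_univ, Finset.mem_insert,
          true_and]
        tauto
      rw [← Finset.mul_prod_erase _ _ ht', hset]
    simp only [e1, e2, e3, e4]
    ring

lemma expand_prod_sub {n q : ℕ} (a : Fin (2*q) → Fin n)
    (X Y : (Fin (2*q) → Fin n) → Fin q → ℝ)
    (hXY : ∀ b t, X (b ∘ Equiv.swap (pr1 t) (pr2 t)) t = Y b t)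
    (hYX : ∀ b t, Y (b ∘ Equiv.swap (pr1 t) (pr2 t)) t = X b t)
    (hXs : ∀ b s t, s ≠ t → X (b ∘ Equiv.swap (pr1 t) (pr2 t)) s = X b s)
    (hYs : ∀ b s t, s ≠ t → Y (b ∘ Equiv.swap (pr1 t) (pr2 t)) s = Y b s) :
    ∑ b : Fin (2*q) → Fin n, gkd a b * ∏ s : Fin q, (X b s - Y b s)
      = 2^q * ∑ b : Fin (2*q) → Fin n, gkd a b * ∏ s : Fin q, X b s := by
  classical
  have h1 : ∀ b, ∏ s : Fin q, (X b s - Y b s)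
      = ∑ T ∈ (Finset.univ : Finset (Fin q)).powerset,
          (∏ s ∈ T, -Y b s) * ∏ s ∈ Finset.univ \ T, X b s := by
    intro b
    rw [← Finset.prod_add]
    exact Finset.prod_congr rfl fun s _ => (neg_add_eq_sub (Y b s) (X b s)).symm
  calc ∑ b : Fin (2*q) → Fin n, gkd a b * ∏ s : Fin q, (X b s - Y b s)
      = ∑ T ∈ (Finset.univ : Finset (Fin q)).powerset, ∑ b : Fin (2*q) → Fin n,
          gkd a b * ((∏ s ∈ T, -Y b s) * ∏ s ∈ Finset.univ \ T, X b s) := by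
        simp only [h1, Finset.mul_sum]
        exact Finset.sum_comm
    _ = ∑ _T ∈ (Finset.univ : Finset (Fin q)).powerset, ∑ b : Fin (2*q) → Fin n,
          gkd a b * ∏ s : Fin q, X b s :=
        Finset.sum_congr rfl fun T _ => sum_swap_invariant a X Y hXY hYX hXs hYs T
    _ = 2^q * ∑ b : Fin (2*q) → Fin n, gkd a b * ∏ s : Fin q, X b s := by
        rw [Finset.sum_const, Finset.card_powerset, Finset.card_univ, Fintype.card_fin,
          nsmul_eq_mul]
        push_cast
        ring

/-- for an isometric immersion `ψ : M^n → ℝ^d` into Euclidean space and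
`0 < q < n/2`, the `q`-th Gauss–Bonnet curvature of the induced metric equals `(2q)!`
times the `2q`-th mean curvature: `L_{(q)} = (2q)! S_{(2q)}`.

Formalized pointwise in coordinates: `Rlow` is the lowered Riemann tensor of the induced
metric, given by the Gauss equation in terms of the (symmetric, normal-valued) second
fundamental form `Blow`; `Rmix` is the mixed Riemann tensor `R_{ab}^{cd}`; `L` is the
`q`-th Gauss–Bonnet curvature and `S` the `2q`-th mean curvature (via `Bm a b = B^a_b`),
both defined via generalized Kronecker deltas. -/
theorem gauss_bonnet_curvature_is_mean_curvature (n q d : ℕ) (hq : 0 < q) (hqn : 2 * q < n)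
    (hd : n < d)
    (g ginv : Matrix (Fin n) (Fin n) ℝ)
    (hgsym : ∀ i j, g i j = g j i)
    (hinv : ∀ i j, (∑ k, g i k * ginv k j) = if i = j then (1 : ℝ) else 0)
    (W : Type) [NormedAddCommGroup W] [InnerProductSpace ℝ W]
    (Blow : Fin n → Fin n → W)
    (hBsym : ∀ i j, Blow i j = Blow j i)
    (Bm : Fin n → Fin n → W)
    (hBm : ∀ a b, Bm a b = ∑ c, ginv a c • Blow c b)
    (Rlow : Fin n → Fin n → Fin n → Fin n → ℝ)
    (hGauss : ∀ i j k l, Rlow i j k l = ⟪Blow i k, Blow j l⟫ - ⟪Blow i l, Blow j k⟫)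
    (Rmix : Fin n → Fin n → Fin n → Fin n → ℝ)   -- Rmix a b c d = R_{ab}^{cd}
    (hRmix : ∀ a b c d, Rmix a b c d = ∑ e, ∑ f, Rlow a b e f * ginv e c * ginv f d)
    (L : ℝ)
    (hL : L = (1 / 2 ^ q) * ∑ a : Fin (2 * q) → Fin n, ∑ b : Fin (2 * q) → Fin n,
      gkd a b * ∏ s : Fin q, Rmix (a (pr1 s)) (a (pr2 s)) (b (pr1 s)) (b (pr2 s)))
    (S : ℝ)
    (hS : S = (1 / ((2 * q).factorial : ℝ)) *
      ∑ a : Fin (2 * q) → Fin n, ∑ b : Fin (2 * q) → Fin n,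
        gkd b a * ∏ s : Fin q,
          ⟪Bm (a (pr1 s)) (b (pr1 s)), Bm (a (pr2 s)) (b (pr2 s))⟫) :
    L = ((2 * q).factorial : ℝ) * S := by
  classical
  -- ginv is symmetric
  have hG : g * ginv = 1 := by
    ext i j
    rw [Matrix.mul_apply, Matrix.one_apply]
    exact hinv i j
  have hgT : g.transpose = g := by
    ext i j
    exact hgsym j i
  have hT : ginv.transpose = ginv := by
    calc ginv.transpose = ginv.transpose * (g * ginv) := by rw [hG, mul_one]
      _ = (ginv.transpose * g.transpose) * ginv := by rw [hgT, mul_assoc]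
      _ = (g * ginv).transpose * ginv := by rw [Matrix.transpose_mul]
      _ = ginv := by rw [hG, Matrix.transpose_one, one_mul]
  have hginvsym : ∀ i j, ginv i j = ginv j i := by
    intro i j
    have h := congrFun (congrFun hT j) i
    simpa [Matrix.transpose_apply] using h
  -- inner products of Bm
  have hBmInner : ∀ x y u v, ⟪Bm x u, Bm y v⟫
      = ∑ e, ∑ f, ginv x e * ginv y f * ⟪Blow u e, Blow v f⟫ := by
    intro x y u v
    simp only [hBm, sum_inner, inner_sum, real_inner_smul_left, real_inner_smul_right]
    rw [Finset.sum_comm]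
    refine Finset.sum_congr rfl fun e _ => Finset.sum_congr rfl fun f _ => ?_
    rw [hBsym e u, hBsym f v]
    ring
  -- Gauss equation for the mixed tensor
  have hR : ∀ a b c d, Rmix a b c d = ⟪Bm c a, Bm d b⟫ - ⟪Bm d a, Bm c b⟫ := by
    intro a b c d
    rw [hRmix, hBmInner, hBmInner]
    rw [show (∑ e, ∑ f, ginv d e * ginv c f * ⟪Blow a e, Blow b f⟫)
        = ∑ e, ∑ f, ginv d f * ginv c e * ⟪Blow a f, Blow b e⟫ from Finset.sum_comm]
    rw [← Finset.sum_sub_distrib]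
    refine Finset.sum_congr rfl fun e _ => ?_
    rw [← Finset.sum_sub_distrib]
    refine Finset.sum_congr rfl fun f _ => ?_
    rw [hGauss, hginvsym e c, hginvsym f d]
    ring
  -- the key per-`a` identity
  have key : ∀ a : Fin (2*q) → Fin n,
      ∑ b : Fin (2*q) → Fin n,
        gkd a b * ∏ s : Fin q, Rmix (a (pr1 s)) (a (pr2 s)) (b (pr1 s)) (b (pr2 s))
      = 2^q * ∑ b : Fin (2*q) → Fin n,
          gkd a b * ∏ s : Fin q, ⟪Bm (b (pr1 s)) (a (pr1 s)), Bm (b (pr2 s)) (a (pr2 s))⟫ := by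
    intro a
    have hexp := expand_prod_sub a
      (X := fun b s => ⟪Bm (b (pr1 s)) (a (pr1 s)), Bm (b (pr2 s)) (a (pr2 s))⟫)
      (Y := fun b s => ⟪Bm (b (pr2 s)) (a (pr1 s)), Bm (b (pr1 s)) (a (pr2 s))⟫)
      (by intro b t; simp [Function.comp, Equiv.swap_apply_left, Equiv.swap_apply_right])
      (by intro b t; simp [Function.comp, Equiv.swap_apply_left, Equiv.swap_apply_right])
      (by
        intro b s t hst
        simp only [Function.comp_apply]
        rw [Equiv.swap_apply_of_ne_of_ne (pr1_ne_pr1 hst) (pr1_ne_pr2 s t),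
          Equiv.swap_apply_of_ne_of_ne (Ne.symm (pr1_ne_pr2 t s)) (pr2_ne_pr2 hst)])
      (by
        intro b s t hst
        simp only [Function.comp_apply]
        rw [Equiv.swap_apply_of_ne_of_ne (pr1_ne_pr1 hst) (pr1_ne_pr2 s t),
          Equiv.swap_apply_of_ne_of_ne (Ne.symm (pr1_ne_pr2 t s)) (pr2_ne_pr2 hst)])
    rw [← hexp]
    refine Finset.sum_congr rfl fun b _ => ?_
    congr 1
    exact Finset.prod_congr rfl fun s _ => hR _ _ _ _
  rw [hL, hS]
  simp only [key]
  rw [← Finset.mul_sum, ← mul_assoc,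
    one_div_mul_cancel (by positivity : (2:ℝ)^q ≠ 0), one_mul, ← mul_assoc,
    mul_one_div_cancel (by positivity : ((2*q).factorial : ℝ) ≠ 0), one_mul]
  exact Finset.sum_comm
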